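/- Let T_n be the chain triangular cactus of order n: the graph consisting of n triangles arranged in a path, where consecutive triangles share exactly one vertex (each cut vertex belongs to exactly two triangles). Then Mo(T_{2k}) = 12k² − 4k and Mo(T_{2k+1}) = 12k² + 8k for all k ≥ 1. -/

import Mathlib

open Finset

section MostarDefs

variable {V : Type*}

/-- Number of vertices of `G` strictly closer to `u` than to `v`. -/
noncomputable def closerCount (G : SimpleGraph V) (u v : V) : ℕ :=
  Nat.card {w : V // G.dist w u < G.dist w v}

/-- Contribution `|n_u - n_v|` of an edge, as a symmetric function on `Sym2 V`. -/
noncomputable def mostarTerm (G : SimpleGraph V) : Sym2 V → ℕ :=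
  Sym2.lift ⟨fun u v => ((closerCount G u v : ℤ) - closerCount G v u).natAbs,
    fun u v => by dsimp only; omega⟩

/-- The Mostar index of a finite graph. -/
noncomputable def mostar (G : SimpleGraph V) [Finite V] : ℕ :=
  letI := Fintype.ofFinite V
  letI := Classical.decEq V
  letI := Classical.decRel G.Adj
  ∑ e ∈ G.edgeFinset, mostarTerm G e

/-- Distance from a vertex `w` to an edge, as min over the endpoints. -/
noncomputable def vertexEdgeDist (G : SimpleGraph V) (w : V) : Sym2 V → ℕ :=
  Sym2.lift ⟨fun x y => min (G.dist x w) (G.dist y w), fun _ _ => min_comm _ _⟩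

/-- Number of edges of `G` strictly closer to `u` than to `v`. -/
noncomputable def edgeCloserCount (G : SimpleGraph V) (u v : V) : ℕ :=
  Nat.card {e : Sym2 V // e ∈ G.edgeSet ∧ vertexEdgeDist G u e < vertexEdgeDist G v e}

/-- Contribution `|m_u - m_v|` of an edge, as a symmetric function on `Sym2 V`. -/
noncomputable def emostarTerm (G : SimpleGraph V) : Sym2 V → ℕ :=
  Sym2.lift ⟨fun u v => ((edgeCloserCount G u v : ℤ) - edgeCloserCount G v u).natAbs,
    fun u v => by dsimp only; omega⟩

/-- The edge Mostar index of a finite graph. -/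
noncomputable def emostar (G : SimpleGraph V) [Finite V] : ℕ :=
  letI := Fintype.ofFinite V
  letI := Classical.decEq V
  letI := Classical.decRel G.Adj
  ∑ e ∈ G.edgeFinset, emostarTerm G e

end MostarDefs

/-- Global index of the `p`-th vertex of the `i`-th cycle in a chain of `n` cycles of
length `c`, where consecutive cycles share one vertex: position `0` of cycle `i` is the
entry cut vertex (identified with position `d` of cycle `i-1`). -/
def chainPos (c d i p : ℕ) : ℕ :=
  if p = 0 then (if i = 0 then 0 else (i - 1) * (c - 1) + d) else i * (c - 1) + p

/-- The chain cactus consisting of `n` cycles of length `c` in a chain, where consecutive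
cycles share exactly one vertex, and the two cut vertices of each internal cycle are at
positions `0` and `d` (hence at distance `min d (c - d)` in the cycle). -/
def cactusChain (n c d : ℕ) : SimpleGraph (Fin (n * (c - 1) + 1)) where
  Adj u v := u ≠ v ∧ ∃ i p q, i < n ∧ p < c ∧ q < c ∧
    ((p + 1) % c = q ∨ (q + 1) % c = p) ∧
    u.val = chainPos c d i p ∧ v.val = chainPos c d i q
  symm := ⟨by
    rintro u v ⟨hne, i, p, q, hi, hp, hq, hpq, hu, hv⟩
    exact ⟨hne.symm, i, q, p, hi, hq, hp, hpq.symm, hv, hu⟩⟩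
  loopless := ⟨fun u h => h.1 rfl⟩

/-!
Relabel the vertices of the chain so that the cut vertices sit at the even positions
`0, 2, …, 2n` and the remaining vertex of the `i`-th triangle at `2i + 1`: the triangles become
`{2i, 2i+1, 2i+2}` and the distance between distinct positions `a, b` is
`(|a - b| + a % 2 + b % 2) / 2`. Across an edge of the `i`-th triangle, the vertices closer to
an endpoint that is a cut vertex are exactly those on its side of the chain, while a vertex of
degree two is closer only to itself. So the three edges of the `i`-th triangle contribute
`2i`, `2n - 2i - 2` and `|(2i + 1) - (2n - 2i - 1)|`, and summing gives
`Mo(T_n) = 3n² - 2n - n % 2`.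
-/

namespace SimpleGraph

variable {V W : Type*} {G : SimpleGraph V} {G' : SimpleGraph W}

theorem dist_eq_of_le_succ_of_exists_adj (f : V → ℕ) (v : V) (hv : f v = 0)
    (hle : ∀ u w, G.Adj u w → f u ≤ f w + 1)
    (hstep : ∀ u, u ≠ v → ∃ w, G.Adj u w ∧ f w + 1 = f u) (u : V) :
    G.dist u v = f u := by
  have hwalk : ∀ m u, f u = m → ∃ p : G.Walk u v, p.length = f u := by
    intro m
    induction m with
    | zero =>
      intro u hu
      by_cases huv : u = v
      · subst huv
        exact ⟨.nil, hu.symm⟩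
      · obtain ⟨w, -, hw⟩ := hstep u huv
        omega
    | succ m ih =>
      intro u hu
      have huv : u ≠ v := by rintro rfl; omega
      obtain ⟨w, hadj, hw⟩ := hstep u huv
      obtain ⟨p, hp⟩ := ih w (by omega)
      exact ⟨.cons hadj p, by simp [hp, hw]⟩
  have hlength : ∀ {u w} (p : G.Walk u w), f u ≤ p.length + f w := by
    intro u w p
    induction p with
    | nil => simp
    | cons hadj p ih =>
      have := hle _ _ hadj
      simp only [Walk.length_cons]
      omega
  obtain ⟨p, hp⟩ := hwalk _ u rfl
  obtain ⟨q, hq⟩ := Reachable.exists_walk_length_eq_dist ⟨p⟩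
  exact le_antisymm (hp ▸ dist_le p) (by simpa [hv, hq] using hlength q)

theorem Iso.dist_eq (e : G ≃g G') (u v : V) : G'.dist (e u) (e v) = G.dist u v := by
  have hlengths : Set.range (Walk.length : G'.Walk (e u) (e v) → ℕ) =
      Set.range (Walk.length : G.Walk u v → ℕ) := by
    ext m
    constructor
    · rintro ⟨p, rfl⟩
      refine ⟨(p.map e.symm.toHom).copy (e.symm_apply_apply u) (e.symm_apply_apply v), ?_⟩
      simp
    · rintro ⟨p, rfl⟩
      exact ⟨p.map e.toHom, Walk.length_map _ _⟩
  rw [dist_eq_sInf, dist_eq_sInf, hlengths]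

theorem Iso.closerCount_eq (e : G ≃g G') (u v : V) :
    closerCount G' (e u) (e v) = closerCount G u v :=
  Nat.card_congr (e.toEquiv.subtypeEquiv fun w => by simp [e.dist_eq]).symm

theorem Iso.mostarTerm_map (e : G ≃g G') (s : Sym2 V) :
    mostarTerm G' (s.map e) = mostarTerm G s := by
  induction s with
  | _ u v => simp [mostarTerm, e.closerCount_eq]

end SimpleGraph

section Mostar

variable {V W : Type*} {G : SimpleGraph V}

theorem closerCount_eq_card [Fintype V] (u v : V) :
    closerCount G u v = #{w | G.dist w u < G.dist w v} :=
  Nat.card_eq_fintype_card.trans (Fintype.card_subtype _)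

theorem mostar_eq_sum [Finite V] (s : Finset (Sym2 V)) (hs : ∀ e, e ∈ s ↔ e ∈ G.edgeSet) :
    mostar G = ∑ e ∈ s, mostarTerm G e := by
  unfold mostar
  congr 1
  ext e
  simp [hs]

theorem SimpleGraph.Iso.mostar_eq {G' : SimpleGraph W} [Finite V] [Finite W] (e : G ≃g G') :
    mostar G' = mostar G := by
  classical
  have := Fintype.ofFinite V
  have := Fintype.ofFinite W
  rw [mostar_eq_sum G'.edgeFinset (by simp), mostar_eq_sum G.edgeFinset (by simp)]
  refine sum_nbij' (Sym2.map e.symm) (Sym2.map e) ?_ ?_ ?_ ?_ ?_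
  · intro s hs
    simpa [e.symm.map_mem_edgeSet_iff] using hs
  · intro s hs
    simpa [e.map_mem_edgeSet_iff] using hs
  · intro s _
    simp [Sym2.map_map]
  · intro s _
    simp [Sym2.map_map]
  · intro s _
    rw [← e.mostarTerm_map, Sym2.map_map]
    simp

end Mostar

def triangleChain (n : ℕ) : SimpleGraph (Fin (2 * n + 1)) where
  Adj a b := a ≠ b ∧ ∃ i, 2 * i ≤ a.val ∧ a.val ≤ 2 * i + 2 ∧ 2 * i ≤ b.val ∧ b.val ≤ 2 * i + 2
  symm := ⟨fun _ _ ⟨hne, i, h⟩ => ⟨hne.symm, i, h.2.2.1, h.2.2.2, h.1, h.2.1⟩⟩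
  loopless := ⟨fun _ h => h.1 rfl⟩

def triangleChainDist (a b : ℕ) : ℕ :=
  if a = b then 0 else (a - b + (b - a) + a % 2 + b % 2) / 2

def triangleEdges {n : ℕ} (i : Fin n) : Finset (Sym2 (Fin (2 * n + 1))) :=
  {s(⟨2 * i, by omega⟩, ⟨2 * i + 1, by omega⟩), s(⟨2 * i + 1, by omega⟩, ⟨2 * i + 2, by omega⟩),
    s(⟨2 * i, by omega⟩, ⟨2 * i + 2, by omega⟩)}

section TriangleChain

variable {n : ℕ}

theorem triangleChain_dist (a b : Fin (2 * n + 1)) :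
    (triangleChain n).dist a b = triangleChainDist a b := by
  refine SimpleGraph.dist_eq_of_le_succ_of_exists_adj (fun c : Fin _ => triangleChainDist c b) b
    (by simp [triangleChainDist]) ?_ ?_ a
  · rintro u w ⟨hne, i, h⟩
    have := Fin.val_ne_of_ne hne
    simp only [triangleChainDist]
    split_ifs <;> omega
  · intro a hab
    have hab' := Fin.val_ne_of_ne hab
    simp only [triangleChain, triangleChainDist, Fin.ext_iff, ne_eq]
    -- unless `b` is already a neighbour, step to the next even position towards `b`
    rcases Nat.lt_or_gt_of_ne hab' with hlt | hgt
    · by_cases hnear : b.val ≤ 2 * (a.val / 2) + 2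
      · exact ⟨b, ⟨hab', a.val / 2, by omega⟩, by split_ifs <;> omega⟩
      · refine ⟨⟨2 * (a.val / 2) + 2, by omega⟩,
          ⟨by simp; omega, a.val / 2, by simp; omega⟩, ?_⟩
        simp only
        split_ifs <;> omega
    · by_cases hnear : a.val ≤ 2 * (b.val / 2) + 2
      · exact ⟨b, ⟨hab', b.val / 2, by omega⟩, by split_ifs <;> omega⟩
      · refine ⟨⟨2 * ((a.val - 1) / 2), by omega⟩,
          ⟨by simp; omega, (a.val - 1) / 2, by simp; omega⟩, ?_⟩
        simp only
        split_ifs <;> omega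

variable {a b : Fin (2 * n + 1)}

theorem closerCount_triangleChain_of_even_of_lt (ha : a.val % 2 = 0) (hab : a < b)
    (hb : b.val ≤ a.val + 2) : closerCount (triangleChain n) a b = a + 1 := by
  rw [closerCount_eq_card, ← Fin.card_Iic]
  congr 1
  ext c
  simp only [mem_filter, mem_univ, true_and, mem_Iic, triangleChain_dist, triangleChainDist,
    Fin.le_def, Fin.lt_def] at hab ⊢
  split_ifs <;> omega

theorem closerCount_triangleChain_of_even_of_gt (ha : a.val % 2 = 0) (hab : b < a)
    (hb : a.val ≤ b.val + 2) : closerCount (triangleChain n) a b = 2 * n + 1 - a := by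
  rw [closerCount_eq_card, ← Fin.card_Ici]
  congr 1
  ext c
  simp only [mem_filter, mem_univ, true_and, mem_Ici, triangleChain_dist, triangleChainDist,
    Fin.le_def, Fin.lt_def] at hab ⊢
  split_ifs <;> omega

theorem closerCount_triangleChain_of_odd (ha : a.val % 2 = 1)
    (hb : b.val = a.val - 1 ∨ b.val = a.val + 1) : closerCount (triangleChain n) a b = 1 := by
  rw [closerCount_eq_card, card_eq_one]
  refine ⟨a, ?_⟩
  ext c
  simp only [mem_filter, mem_univ, true_and, mem_singleton, triangleChain_dist,
    triangleChainDist, Fin.ext_iff]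
  split_ifs <;> omega

theorem mem_biUnion_triangleEdges_iff (e : Sym2 (Fin (2 * n + 1))) :
    e ∈ univ.biUnion triangleEdges ↔ e ∈ (triangleChain n).edgeSet := by
  induction e with
  | _ a b =>
    simp only [mem_biUnion, mem_univ, true_and, triangleEdges, mem_insert, mem_singleton,
      Sym2.eq_iff, Fin.ext_iff, SimpleGraph.mem_edgeSet, triangleChain, ne_eq]
    constructor
    · rintro ⟨i, h⟩
      exact ⟨by omega, i, by omega⟩
    · rintro ⟨hab, i, h⟩
      refine ⟨⟨i, by omega⟩, ?_⟩
      simp only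
      omega

theorem pairwiseDisjoint_triangleEdges :
    Set.PairwiseDisjoint (↑(univ : Finset (Fin n)) : Set (Fin n)) triangleEdges := by
  intro i _ j _ hij
  simp only [Function.onFun, Finset.disjoint_left, triangleEdges, mem_insert, mem_singleton]
  rintro e (rfl | rfl | rfl) <;> simp [Fin.ext_iff] <;> omega

theorem sum_mostarTerm_triangleEdges (i : Fin n) :
    ∑ e ∈ triangleEdges i, mostarTerm (triangleChain n) e =
      2 * n - 2 + ((4 * i + 2 : ℤ) - 2 * n).natAbs := by
  rw [triangleEdges, sum_insert (by simp [Fin.ext_iff]), sum_insert (by simp [Fin.ext_iff]),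
    sum_singleton]
  simp only [mostarTerm, Sym2.lift_mk]
  rw [closerCount_triangleChain_of_even_of_lt, closerCount_triangleChain_of_odd,
    closerCount_triangleChain_of_odd, closerCount_triangleChain_of_even_of_gt,
    closerCount_triangleChain_of_even_of_lt, closerCount_triangleChain_of_even_of_gt]
  all_goals simp [Fin.lt_def]
  all_goals omega

end TriangleChain

theorem sum_range_natAbs_four_mul_add_two_sub_add_mod_two (n : ℕ) :
    ∑ i ∈ range n, ((4 * i + 2 : ℤ) - 2 * n).natAbs + n % 2 = n ^ 2 := by
  induction n using Nat.twoStepInduction with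
  | zero => simp
  | one => simp
  | more n ih _ =>
    rw [sum_range_succ', sum_range_succ]
    have hshift : ∀ i ∈ range n, ((4 * (i + 1 : ℕ) + 2 : ℤ) - 2 * (n + 2 : ℕ)).natAbs =
        ((4 * i + 2 : ℤ) - 2 * n).natAbs := fun i _ => by push_cast; ring_nf
    have hfirst : ((4 * (0 : ℕ) + 2 : ℤ) - 2 * (n + 2 : ℕ)).natAbs = 2 * n + 2 := by omega
    have hlast : ((4 * (n + 1 : ℕ) + 2 : ℤ) - 2 * (n + 2 : ℕ)).natAbs = 2 * n + 2 := by omega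
    rw [sum_congr rfl hshift, hfirst, hlast, Nat.add_mod_right]
    linear_combination ih

theorem mostar_triangleChain (n : ℕ) :
    mostar (triangleChain n) + 2 * n + n % 2 = 3 * n ^ 2 := by
  rw [mostar_eq_sum _ mem_biUnion_triangleEdges_iff, sum_biUnion pairwiseDisjoint_triangleEdges]
  simp only [sum_mostarTerm_triangleEdges]
  rw [Fin.sum_univ_eq_sum_range (fun i => 2 * n - 2 + ((4 * i + 2 : ℤ) - 2 * n).natAbs),
    sum_add_distrib, sum_const, card_range, smul_eq_mul]
  have hpairs : n * (2 * n - 2) + 2 * n = 2 * n ^ 2 := by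
    rcases n with _ | m
    · simp
    · rw [show 2 * (m + 1) - 2 = 2 * m by omega]
      ring
  linear_combination hpairs + sum_range_natAbs_four_mul_add_two_sub_add_mod_two n

/-- Sends the cut vertices `0, 1, 3, …, 2n - 1` of `cactusChain n 3 1` to `0, 2, 4, …, 2n` and
the third vertex `2i + 2` of the `i`-th triangle to `2i + 1`. -/
def chainPosition (v : ℕ) : ℕ :=
  if v = 0 then 0 else if v % 2 = 1 then v + 1 else v - 1

theorem chainPosition_involutive : Function.Involutive chainPosition := by
  intro v
  grind [chainPosition]

theorem chainPosition_le {n v : ℕ} (hv : v ≤ 2 * n) : chainPosition v ≤ 2 * n := by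
  simp only [chainPosition]
  split_ifs <;> omega

theorem chainPosition_chainPos (i p : ℕ) (hp : p < 3) :
    chainPosition (chainPos 3 1 i p) = 2 * i + 2 * p % 3 := by
  interval_cases p <;> grind [chainPosition, chainPos]

def chainPositionEquiv (n : ℕ) : Fin (n * (3 - 1) + 1) ≃ Fin (2 * n + 1) where
  toFun v := ⟨chainPosition v, by have := chainPosition_le (n := n) (v := v) (by omega); omega⟩
  invFun a := ⟨chainPosition a, by have := chainPosition_le (n := n) (v := a) (by omega); omega⟩
  left_inv v := Fin.ext (chainPosition_involutive v)
  right_inv a := Fin.ext (chainPosition_involutive a)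

theorem cactusChain_eq_comap (n : ℕ) :
    cactusChain n 3 1 = (triangleChain n).comap (chainPositionEquiv n) := by
  ext u v
  simp only [cactusChain, SimpleGraph.comap_adj, triangleChain, chainPositionEquiv,
    Equiv.coe_fn_mk, ne_eq, Fin.ext_iff]
  have hinj := chainPosition_involutive.injective
  constructor
  · rintro ⟨huv, i, p, q, -, hp, hq, -, hu, hv⟩
    have hpq : p ≠ q := by rintro rfl; exact huv (hu.trans hv.symm)
    rw [hu, hv, chainPosition_chainPos i p hp, chainPosition_chainPos i q hq]
    exact ⟨by omega, i, by omega⟩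
  · rintro ⟨huv, i, hu⟩
    have hu_le := chainPosition_le (n := n) (v := u) (by omega)
    have hv_le := chainPosition_le (n := n) (v := v) (by omega)
    -- `p ↦ 2 * p % 3` is its own inverse on `{0, 1, 2}`
    have hchain : ∀ w : ℕ, 2 * i ≤ chainPosition w → chainPosition w ≤ 2 * i + 2 →
        ∃ p < 3, chainPos 3 1 i p = w := fun w h₁ h₂ => by
      refine ⟨2 * (chainPosition w - 2 * i) % 3, by omega, hinj ?_⟩
      rw [chainPosition_chainPos _ _ (by omega)]
      omega
    obtain ⟨p, hp, hpu⟩ := hchain u (by omega) (by omega)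
    obtain ⟨q, hq, hqv⟩ := hchain v (by omega) (by omega)
    have hpq : p ≠ q := by rintro rfl; exact huv (by rw [← hpu, ← hqv])
    exact ⟨fun h => huv (by rw [h]), i, p, q, by omega, hp, hq, by omega, hpu.symm, hqv.symm⟩

theorem mostar_cactusChain_three_one (n : ℕ) :
    mostar (cactusChain n 3 1) + 2 * n + n % 2 = 3 * n ^ 2 := by
  rw [cactusChain_eq_comap,
    ← (SimpleGraph.Iso.comap (chainPositionEquiv n) (triangleChain n)).mostar_eq]
  exact mostar_triangleChain n

theorem mostar_chainTriangular_general (k : ℕ) :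
    mostar (cactusChain (2 * k) 3 1) = 12 * k ^ 2 - 4 * k ∧
    mostar (cactusChain (2 * k + 1) 3 1) = 12 * k ^ 2 + 8 * k := by
  have heven := mostar_cactusChain_three_one (2 * k)
  have hodd := mostar_cactusChain_three_one (2 * k + 1)
  ring_nf at heven hodd
  constructor <;> omega

theorem mostar_chainTriangular (k : ℕ) (hk : 1 ≤ k) :
    mostar (cactusChain (2 * k) 3 1) = 12 * k ^ 2 - 4 * k ∧
    mostar (cactusChain (2 * k + 1) 3 1) = 12 * k ^ 2 + 8 * k :=
  mostar_chainTriangular_general k
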